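/- Lemma 4.1, converse part: let ν be a nonzero σ-finite Borel measure on (0,∞) with ∫_{(0,∞)} min(x,1) ν(dx) < ∞, and define Φ(t) = ∫_{(0,∞)} (1 − exp(−t(1 − e^{−x}))) ν(dx) for t > 0. Let c > 0. If for some integer r ≥ 1, lim_{t→∞} (−1)^{r+1} t^r Φ^{(r)}(t) = c·(r−1)!, then for every λ > 0, lim_{t→∞} (Φ(λt) − Φ(t)) = c·log λ. -/

import Mathlib

open Filter MeasureTheory Set Topology Real
open scoped Nat

/-!
Write `g x = 1 - e^{-x}`, so `0 ≤ g x ≤ min x 1`, and `F_j t = ∫ g^j e^{-t g} dν`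
(`levyDeriv ν j t`). Domination by `min x 1` lets us differentiate under the integral:
`Φ' = F₁` and `F_j' = -F_{j+1}`, hence `(-1)^{r+1} Φ^{(r)} = F_r`; dominated convergence gives
`F_j → 0` at infinity. L'Hôpital's rule applied to `F_k / t^{-k}` turns `t^{k+1} F_{k+1}(t) → C`
into `t^k F_k(t) → C / k`, so descending from `r` yields `t Φ'(t) = t F₁(t) → c`.
Finally `u ↦ Φ(e^u)` has derivative `e^u Φ'(e^u) → c`, so by the mean value theorem its
increments over `[u, u + log λ]` tend to `c log λ`; take `u = log t`.
-/

theorem tendsto_add_sub_of_tendsto_deriv {h h' : ℝ → ℝ} {c : ℝ}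
    (hd : ∀ u, HasDerivAt h (h' u) u) (hlim : Tendsto h' atTop (𝓝 c)) (a : ℝ) :
    Tendsto (fun u => h (u + a) - h u) atTop (𝓝 (c * a)) := by
  rw [Metric.tendsto_atTop]
  intro ε hε
  obtain ⟨N, hN⟩ := Metric.tendsto_atTop.1 hlim (ε / (|a| + 1)) (by positivity)
  refine ⟨N + |a|, fun u hu => ?_⟩
  have hmvt := (convex_Ici N).norm_image_sub_le_of_norm_hasDerivWithin_le
    (f := fun v => h v - c * v) (f' := fun v => h' v - c)
    (fun v _ => ((hd v).sub ((hasDerivAt_id v).const_mul c)).hasDerivWithinAt.congr_deriv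
      (by simp)) (fun v hv => (hN v hv).le)
    (x := u) (y := u + a) (mem_Ici.2 (by linarith [abs_nonneg a]))
    (mem_Ici.2 (by linarith [neg_abs_le a]))
  rw [dist_eq_norm]
  calc ‖h (u + a) - h u - c * a‖ = ‖h (u + a) - c * (u + a) - (h u - c * u)‖ := by ring_nf
    _ ≤ ε / (|a| + 1) * ‖u + a - u‖ := hmvt
    _ < ε := by
      rw [add_sub_cancel_left, norm_eq_abs, div_mul_eq_mul_div, div_lt_iff₀ (by positivity)]
      nlinarith [abs_nonneg a]

theorem tendsto_comp_mul_sub_of_tendsto_mul_deriv {f f' : ℝ → ℝ} {c l : ℝ}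
    (hd : ∀ t, 0 < t → HasDerivAt f (f' t) t) (hlim : Tendsto (fun t => t * f' t) atTop (𝓝 c))
    (hl : 0 < l) : Tendsto (fun t => f (l * t) - f t) atTop (𝓝 (c * log l)) := by
  have hexp := tendsto_add_sub_of_tendsto_deriv (h := f ∘ exp)
    (fun u => (hd _ (exp_pos u)).comp u (hasDerivAt_exp u))
    ((hlim.comp tendsto_exp_atTop).congr fun u => mul_comm _ _) (log l)
  refine (hexp.comp tendsto_log_atTop).congr' ?_
  filter_upwards [eventually_gt_atTop 0] with t ht
  simp [exp_add, exp_log ht, exp_log hl, mul_comm]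

theorem tendsto_pow_mul_of_hasDerivAt_neg {f g : ℝ → ℝ} {k : ℕ} {C : ℝ} (hk : k ≠ 0)
    (hfg : ∀ t, HasDerivAt f (-g t) t) (hf : Tendsto f atTop (𝓝 0))
    (hg : Tendsto (fun t => t ^ (k + 1) * g t) atTop (𝓝 C)) :
    Tendsto (fun t => t ^ k * f t) atTop (𝓝 (C / k)) := by
  have hlh := HasDerivAt.lhopital_zero_atTop (l := 𝓝 (C / k)) (f := f)
    (g := fun t => t ^ (-(k : ℤ))) (Eventually.of_forall hfg)
    (eventually_gt_atTop 0 |>.mono fun t ht => hasDerivAt_zpow _ t (.inl ht.ne'))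
    (eventually_gt_atTop 0 |>.mono fun t ht => mul_ne_zero (by simpa using hk)
      (zpow_ne_zero _ ht.ne'))
    hf (tendsto_zpow_atTop_zero (by omega)) ?_
  · refine hlh.congr' ?_
    filter_upwards [eventually_gt_atTop 0] with t ht
    rw [zpow_neg, zpow_natCast, div_inv_eq_mul, mul_comm]
  · refine (hg.div_const k).congr' ?_
    filter_upwards [eventually_gt_atTop 0] with t ht
    have hpow : t ^ (-(k : ℤ) - 1) = (t ^ (k + 1))⁻¹ := by
      rw [← zpow_natCast, ← zpow_neg]; congr 1; push_cast; ring
    have hk' : (k : ℝ) ≠ 0 := by exact_mod_cast hk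
    rw [hpow, Int.cast_neg, Int.cast_natCast]
    field_simp

theorem tendsto_mul_of_tendsto_pow_mul {F : ℕ → ℝ → ℝ} {c : ℝ} {r : ℕ} (hr : 1 ≤ r)
    (hF : ∀ k, 1 ≤ k → ∀ t, HasDerivAt (F k) (-F (k + 1) t) t)
    (hF0 : ∀ k, 1 ≤ k → Tendsto (F k) atTop (𝓝 0))
    (h : Tendsto (fun t => t ^ r * F r t) atTop (𝓝 (c * (r - 1)!))) :
    Tendsto (fun t => t * F 1 t) atTop (𝓝 c) := by
  obtain ⟨n, rfl⟩ := Nat.exists_eq_add_of_le' hr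
  have h_desc : ∀ k ≤ n, Tendsto (fun t => t ^ (k + 1) * F (k + 1) t) atTop (𝓝 (c * k !)) := by
    intro k hk
    induction hk using Nat.decreasingInduction with
    | self => simpa using h
    | of_succ k _ ih =>
      have hstep := tendsto_pow_mul_of_hasDerivAt_neg k.succ_ne_zero (hF _ le_add_self)
        (hF0 _ le_add_self) ih
      convert hstep using 2
      push_cast [Nat.factorial_succ]
      field_simp
  simpa using h_desc 0 (Nat.zero_le n)

theorem one_sub_exp_neg_nonneg {x : ℝ} (hx : 0 ≤ x) : 0 ≤ 1 - exp (-x) :=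
  sub_nonneg.2 (exp_le_one_iff.2 (neg_nonpos.2 hx))

theorem one_sub_exp_neg_le_min (x : ℝ) : 1 - exp (-x) ≤ min x 1 :=
  le_min (by linarith [add_one_le_exp (-x)]) (by linarith [exp_pos (-x)])

theorem abs_exp_sub_one_le_mul_exp_abs (u : ℝ) : |exp u - 1| ≤ |u| * exp |u| := by
  rw [mul_comm]
  simpa using (convex_Icc (-|u|) |u|).norm_image_sub_le_of_norm_hasDerivWithin_le
    (fun v _ => (hasDerivAt_exp v).hasDerivWithinAt) (fun v hv => by
      rw [norm_of_nonneg (exp_pos v).le]; exact exp_le_exp.2 hv.2)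
    (x := 0) (y := u) ⟨by simp, abs_nonneg u⟩ ⟨neg_abs_le u, le_abs_self u⟩

noncomputable def levyIntegrand (j : ℕ) (t x : ℝ) : ℝ :=
  (1 - exp (-x)) ^ j * exp (-t * (1 - exp (-x)))

noncomputable def levyDeriv (ν : Measure ℝ) (j : ℕ) (t : ℝ) : ℝ :=
  ∫ x in Ioi 0, levyIntegrand j t x ∂ν

theorem continuous_levyIntegrand (j : ℕ) (t : ℝ) : Continuous (levyIntegrand j t) := by
  unfold levyIntegrand; fun_prop

theorem hasDerivAt_levyIntegrand (j : ℕ) (s x : ℝ) :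
    HasDerivAt (levyIntegrand j · x) (-levyIntegrand (j + 1) s x) s := by
  have := (((hasDerivAt_id s).neg.mul_const (1 - exp (-x))).exp).const_mul ((1 - exp (-x)) ^ j)
  refine this.congr_deriv ?_
  simp only [levyIntegrand, pow_succ, Pi.neg_apply, id]
  ring

theorem norm_levyIntegrand_le {j : ℕ} (hj : 1 ≤ j) {s B x : ℝ} (hB : 0 ≤ B) (hs : -s ≤ B)
    (hx : 0 < x) :
    ‖levyIntegrand j s x‖ ≤ min x 1 * exp B := by
  have hg0 := one_sub_exp_neg_nonneg hx.le
  have hg1 : 1 - exp (-x) ≤ 1 := by linarith [exp_pos (-x)]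
  rw [levyIntegrand, norm_mul, norm_pow, norm_of_nonneg hg0, norm_of_nonneg (exp_pos _).le]
  gcongr
  · calc (1 - exp (-x)) ^ j ≤ 1 - exp (-x) := pow_le_of_le_one hg0 hg1 (by omega)
      _ ≤ min x 1 := one_sub_exp_neg_le_min x
  · nlinarith [mul_le_mul_of_nonneg_left hg1 hB, mul_le_mul_of_nonneg_right hs hg0]

section
variable {ν : Measure ℝ}

theorem integrableOn_min_one (hint : ∫⁻ x in Ioi 0, ENNReal.ofReal (min x 1) ∂ν < ⊤) :
    IntegrableOn (fun x => min x 1) (Ioi 0) ν := by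
  refine ⟨by fun_prop, ?_⟩
  rwa [hasFiniteIntegral_iff_ofReal]
  filter_upwards [ae_restrict_mem measurableSet_Ioi] with x hx
  exact le_min hx.le zero_le_one

theorem hasDerivAt_setIntegral_of_hasDerivAt_levyIntegrand
    (hν : IntegrableOn (fun x => min x 1) (Ioi 0) ν) {F : ℝ → ℝ → ℝ} {a t : ℝ} {j : ℕ}
    (hF_cont : ∀ s, Continuous (F s)) (hF_int : IntegrableOn (F t) (Ioi 0) ν)
    (hF : ∀ s x, HasDerivAt (F · x) (a * levyIntegrand (j + 1) s x) s) :
    HasDerivAt (fun s => ∫ x in Ioi 0, F s x ∂ν) (a * levyDeriv ν (j + 1) t) t := by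
  have hdom := hasDerivAt_integral_of_dominated_loc_of_deriv_le (μ := ν.restrict (Ioi 0))
    (F := F) (F' := fun s x => a * levyIntegrand (j + 1) s x)
    (bound := fun x => |a| * (min x 1 * exp (|t| + 1))) (Metric.ball_mem_nhds t zero_lt_one)
    (Eventually.of_forall fun s => (hF_cont s).aestronglyMeasurable) hF_int
    ((continuous_const.mul (continuous_levyIntegrand _ t)).aestronglyMeasurable) ?_
    ((hν.mul_const _).const_mul _) ?_
  · rw [levyDeriv, ← integral_const_mul]
    exact hdom.2
  · filter_upwards [ae_restrict_mem measurableSet_Ioi] with x hx s hs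
    rw [norm_mul, norm_eq_abs a]
    refine mul_le_mul_of_nonneg_left (norm_levyIntegrand_le (by omega) (by positivity) ?_ hx)
      (abs_nonneg a)
    rw [Metric.mem_ball, dist_eq_norm, norm_eq_abs] at hs
    linarith [neg_abs_le (s - t), neg_abs_le t]
  · exact Eventually.of_forall fun x s _ => hF s x

theorem integrableOn_levyIntegrand (hν : IntegrableOn (fun x => min x 1) (Ioi 0) ν)
    {j : ℕ} (hj : 1 ≤ j) (t : ℝ) : IntegrableOn (levyIntegrand j t) (Ioi 0) ν := by
  refine (hν.mul_const (exp |t|)).mono'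
    (continuous_levyIntegrand j t).aestronglyMeasurable ?_
  filter_upwards [ae_restrict_mem measurableSet_Ioi] with x hx
  exact norm_levyIntegrand_le hj (abs_nonneg t) (neg_le_abs t) hx

theorem integrableOn_one_sub_exp (hν : IntegrableOn (fun x => min x 1) (Ioi 0) ν)
    (t : ℝ) : IntegrableOn (fun x => 1 - exp (-t * (1 - exp (-x)))) (Ioi 0) ν := by
  refine (hν.mul_const (|t| * exp |t|)).mono' (by fun_prop) ?_
  filter_upwards [ae_restrict_mem measurableSet_Ioi] with x hx
  have hg0 := one_sub_exp_neg_nonneg hx.le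
  have hg1 := one_sub_exp_neg_le_min x
  have hmin1 : min x 1 ≤ 1 := min_le_right _ _
  have habs : |-t * (1 - exp (-x))| = |t| * (1 - exp (-x)) := by
    rw [abs_mul, abs_neg, abs_of_nonneg hg0]
  rw [norm_eq_abs, abs_sub_comm]
  calc |exp (-t * (1 - exp (-x))) - 1| ≤ |t| * (1 - exp (-x)) * exp (|t| * (1 - exp (-x))) := by
        simpa only [habs] using abs_exp_sub_one_le_mul_exp_abs (-t * (1 - exp (-x)))
    _ ≤ |t| * min x 1 * exp |t| := by
        gcongr
        · exact mul_nonneg (abs_nonneg t) (hg0.trans hg1)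
        · exact mul_le_of_le_one_right (abs_nonneg t) (hg1.trans hmin1)
    _ = min x 1 * (|t| * exp |t|) := by ring

theorem hasDerivAt_levyDeriv (hν : IntegrableOn (fun x => min x 1) (Ioi 0) ν)
    {j : ℕ} (hj : 1 ≤ j) (t : ℝ) : HasDerivAt (levyDeriv ν j) (-levyDeriv ν (j + 1) t) t := by
  have := hasDerivAt_setIntegral_of_hasDerivAt_levyIntegrand (a := -1) hν
    (continuous_levyIntegrand j) (integrableOn_levyIntegrand hν hj t)
    (fun s x => (hasDerivAt_levyIntegrand j s x).congr_deriv (neg_one_mul _).symm)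
  rwa [neg_one_mul] at this

theorem hasDerivAt_levyExponent (hν : IntegrableOn (fun x => min x 1) (Ioi 0) ν)
    {Φ : ℝ → ℝ} (hΦ : ∀ t, Φ t = ∫ x in Ioi 0, (1 - exp (-t * (1 - exp (-x)))) ∂ν) (t : ℝ) :
    HasDerivAt Φ (levyDeriv ν 1 t) t := by
  rw [show Φ = _ from funext hΦ]
  have := hasDerivAt_setIntegral_of_hasDerivAt_levyIntegrand (a := 1) (j := 0) hν
    (fun s => by fun_prop) (integrableOn_one_sub_exp hν t) fun s x =>
      ((((hasDerivAt_id s).neg.mul_const (1 - exp (-x))).exp).const_sub 1).congr_deriv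
        (by simp only [levyIntegrand, Pi.neg_apply, id]; ring)
  rwa [one_mul] at this

theorem tendsto_levyDeriv_atTop_nhds_zero (hν : IntegrableOn (fun x => min x 1) (Ioi 0) ν)
    {j : ℕ} (hj : 1 ≤ j) : Tendsto (levyDeriv ν j) atTop (𝓝 0) := by
  rw [← integral_zero ℝ ℝ]
  refine tendsto_integral_filter_of_dominated_convergence (fun x => min x 1)
    (Eventually.of_forall fun s => (continuous_levyIntegrand j s).aestronglyMeasurable) ?_
    hν ?_
  · filter_upwards [eventually_ge_atTop 0] with s hs
    filter_upwards [ae_restrict_mem measurableSet_Ioi] with x hx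
    simpa using norm_levyIntegrand_le hj le_rfl (neg_nonpos.2 hs) hx
  · filter_upwards [ae_restrict_mem measurableSet_Ioi] with x hx
    have hg : 0 < 1 - exp (-x) := sub_pos.2 (exp_lt_one_iff.2 (neg_lt_zero.2 hx))
    have := ((tendsto_exp_atBot.comp (tendsto_neg_atTop_atBot.atBot_mul_const hg)).const_mul
      ((1 - exp (-x)) ^ j))
    simpa [levyIntegrand] using this

theorem iteratedDeriv_levyExponent (hν : IntegrableOn (fun x => min x 1) (Ioi 0) ν)
    {Φ : ℝ → ℝ} (hΦ : ∀ t, Φ t = ∫ x in Ioi 0, (1 - exp (-t * (1 - exp (-x)))) ∂ν)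
    {j : ℕ} (hj : 1 ≤ j) : iteratedDeriv j Φ = fun t => (-1) ^ (j + 1) * levyDeriv ν j t := by
  induction j, hj using Nat.le_induction with
  | base => ext t; simp [(hasDerivAt_levyExponent hν hΦ t).deriv]
  | succ j hj ih =>
    ext t
    rw [iteratedDeriv_succ, ih, ((hasDerivAt_levyDeriv hν hj t).const_mul _).deriv, pow_succ]
    ring

end

theorem levy_exponent_deriv_implies_deHaan_general (ν : Measure ℝ)
    (hint : ∫⁻ x in Set.Ioi (0 : ℝ), ENNReal.ofReal (min x 1) ∂ν < ⊤)
    (Φ : ℝ → ℝ)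
    (hΦ : ∀ t : ℝ, Φ t =
      ∫ x in Set.Ioi (0 : ℝ), (1 - Real.exp (-t * (1 - Real.exp (-x)))) ∂ν)
    (c : ℝ)
    (r : ℕ) (hr : 1 ≤ r)
    (hderiv : Tendsto (fun t : ℝ => (-1 : ℝ) ^ (r + 1) * t ^ r * iteratedDeriv r Φ t)
      atTop (nhds (c * (Nat.factorial (r - 1) : ℝ)))) :
    ∀ l : ℝ, 0 < l →
      Tendsto (fun t : ℝ => Φ (l * t) - Φ t) atTop (nhds (c * Real.log l)) := by
  have hν := integrableOn_min_one hint
  have hsign : (-1 : ℝ) ^ (r + 1) * (-1) ^ (r + 1) = 1 := by rw [← mul_pow]; norm_num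
  have hr_deriv : Tendsto (fun t => t ^ r * levyDeriv ν r t) atTop (𝓝 (c * (r - 1)!)) :=
    hderiv.congr fun t => by
      rw [iteratedDeriv_levyExponent hν hΦ hr]
      linear_combination (t ^ r * levyDeriv ν r t) * hsign
  have h_first := tendsto_mul_of_tendsto_pow_mul (F := levyDeriv ν) hr
    (fun _ => hasDerivAt_levyDeriv hν) (fun _ => tendsto_levyDeriv_atTop_nhds_zero hν) hr_deriv
  exact fun l hl => tendsto_comp_mul_sub_of_tendsto_mul_deriv
    (fun t _ => hasDerivAt_levyExponent hν hΦ t) h_first hl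

/-- Lemma 4.1, converse part. Let `ν` be a nonzero σ-finite Borel measure on `(0,∞)` with
`∫ min(x,1) ν(dx) < ∞`, and let `Φ(t) = ∫_{(0,∞)} (1 - exp(-t(1-e^{-x}))) ν(dx)`. If for some
integer `r ≥ 1`, `(-1)^{r+1} t^r Φ^{(r)}(t) → c (r-1)!` as `t → ∞` (with `c > 0`), then for
every `λ > 0`, `Φ(λt) - Φ(t) → c log λ` as `t → ∞`. -/
theorem levy_exponent_deriv_implies_deHaan (ν : Measure ℝ) [SigmaFinite ν]
    (hsupp : ν (Set.Iic 0) = 0) (hnz : ν ≠ 0)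
    (hint : ∫⁻ x in Set.Ioi (0 : ℝ), ENNReal.ofReal (min x 1) ∂ν < ⊤)
    (Φ : ℝ → ℝ)
    (hΦ : ∀ t : ℝ, Φ t =
      ∫ x in Set.Ioi (0 : ℝ), (1 - Real.exp (-t * (1 - Real.exp (-x)))) ∂ν)
    (c : ℝ) (hc : 0 < c)
    (r : ℕ) (hr : 1 ≤ r)
    (hderiv : Tendsto (fun t : ℝ => (-1 : ℝ) ^ (r + 1) * t ^ r * iteratedDeriv r Φ t)
      atTop (nhds (c * (Nat.factorial (r - 1) : ℝ)))) :
    ∀ l : ℝ, 0 < l →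
      Tendsto (fun t : ℝ => Φ (l * t) - Φ t) atTop (nhds (c * Real.log l)) :=
  levy_exponent_deriv_implies_deHaan_general ν hint Φ hΦ c r hr hderiv
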